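/- arXiv:2501.10491 — 3 statements merged into one kernel-verified Lean document; each statement's English description precedes it below -/
import Mathlib

section
/- Non-monotonicity of operations on grounds: let 𝔅 be the logical (empty) atomic base over a propositional language containing an atom p, and let 𝔅⁺ be its expansion whose atomic system has p as sole axiom. Then the empty function is a 𝔅-operation on grounds of operational type p ▷ ⊥, but there exists no 𝔅⁺-operation on grounds of operational type p ▷ ⊥. -/
/-- Atomic derivations (with no undischarged assumptions) in a Post system
whose rules are pairs (premises, conclusion) of atoms. -/
inductive ADeriv (R : Set (List ℕ × ℕ)) : ℕ → Type where
  | node (prems : List ℕ) (concl : ℕ) (h : (prems, concl) ∈ R)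
      (subs : ∀ i : Fin prems.length, ADeriv R (prems.get i)) : ADeriv R concl

/-- By clause (⊥), there is no ground on any base for ⊢ ⊥: the type of grounds
for ⊥ is empty. A 𝔅-operation on grounds of type p ▷ ⊥ is a total function from
grounds on 𝔅 for ⊢ p (closed derivations of p) to grounds on 𝔅 for ⊢ ⊥. -/
def GroundForBot : Type := Empty

/-- non-monotonicity of operations on grounds. Over the logical
(empty) base there is an operation (the empty function) of type p ▷ ⊥, but over
the expansion whose atomic system has p as sole axiom there is no operation on
grounds of type p ▷ ⊥. -/
theorem nonmonotonicity_of_operations (p : ℕ) :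
    Nonempty (ADeriv (∅ : Set (List ℕ × ℕ)) p → GroundForBot) ∧
    IsEmpty (ADeriv ({([], p)} : Set (List ℕ × ℕ)) p → GroundForBot) := by
  constructor
  · exact ⟨fun d => by cases d with | node prems concl h subs => exact absurd h (Set.notMem_empty _)⟩
  · have d : ADeriv ({([], p)} : Set (List ℕ × ℕ)) p :=
      ADeriv.node [] p rfl (fun i => absurd i.2 (by simp))
    exact ⟨fun f => (f d).elim⟩
end

section
/- Prawitz's conjecture implies semantic completeness of IL: if for every operational type τ₁,…,τₙ ▷ τₙ₊₁ inhabited by a universal operation on grounds the corresponding inference rule (with matching bindings and dischargings) is derivable in intuitionistic first-order logic, then Γ ⊨ α implies Γ ⊢_IL α for all Γ and α. -/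
/-- First-order formulas over a type `Ind` of individuals, with quantifiers in
higher-order abstract syntax. -/
inductive Form (Ind : Type) where
  | atom : ℕ → List Ind → Form Ind
  | bot : Form Ind
  | conj : Form Ind → Form Ind → Form Ind
  | disj : Form Ind → Form Ind → Form Ind
  | imp : Form Ind → Form Ind → Form Ind
  | all : (Ind → Form Ind) → Form Ind
  | exi : (Ind → Form Ind) → Form Ind

/-- Intuitionistic first-order natural deduction derivability Γ ⊢_IL α. -/
inductive IL {Ind : Type} : Set (Form Ind) → Form Ind → Prop where
  | ax {Γ} {a : Form Ind} : a ∈ Γ → IL Γ a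
  | andI {Γ} {a b : Form Ind} : IL Γ a → IL Γ b → IL Γ (.conj a b)
  | andE1 {Γ} {a b : Form Ind} : IL Γ (.conj a b) → IL Γ a
  | andE2 {Γ} {a b : Form Ind} : IL Γ (.conj a b) → IL Γ b
  | orI1 {Γ} {a b : Form Ind} : IL Γ a → IL Γ (.disj a b)
  | orI2 {Γ} {a b : Form Ind} : IL Γ b → IL Γ (.disj a b)
  | orE {Γ} {a b c : Form Ind} : IL Γ (.disj a b) →
      IL (insert a Γ) c → IL (insert b Γ) c → IL Γ c
  | impI {Γ} {a b : Form Ind} : IL (insert a Γ) b → IL Γ (.imp a b)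
  | impE {Γ} {a b : Form Ind} : IL Γ (.imp a b) → IL Γ a → IL Γ b
  | botE {Γ} {a : Form Ind} : IL Γ .bot → IL Γ a
  | allI {Γ} {φ : Ind → Form Ind} : (∀ k, IL Γ (φ k)) → IL Γ (.all φ)
  | allE {Γ} {φ : Ind → Form Ind} (k : Ind) : IL Γ (.all φ) → IL Γ (φ k)
  | exI {Γ} {φ : Ind → Form Ind} (k : Ind) : IL Γ (φ k) → IL Γ (.exi φ)
  | exE {Γ} {φ : Ind → Form Ind} {c : Form Ind} : IL Γ (.exi φ) →
      (∀ k, IL (insert (φ k) Γ) c) → IL Γ c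

/- Ground-theoretic semantics with operational types whose entries are
pre-types (a set of discharged hypotheses together with a premise formula). -/
structure GroundSem (Ind : Type) where
  /-- operations on grounds -/
  GObj : Type
  /-- universal operations on grounds -/
  UniversalOp : GObj → Prop
  /-- `OfOpType g ents β`: g is an operation on grounds of the operational type
  whose entries are the pre-types `ents` (hypotheses ▷ premise) and whose
  co-domain is β -/
  OfOpType : GObj → List (Set (Form Ind) × Form Ind) → Form Ind → Prop

/-- Γ ⊨ α: there is a (composition of universal operations resulting in a)
universal operation on grounds of operational type Γ ▷ α. -/
def Models {Ind : Type} (S : GroundSem Ind) (Γ : List (Form Ind))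
    (α : Form Ind) : Prop :=
  ∃ g : S.GObj, S.UniversalOp g ∧
    S.OfOpType g (Γ.map fun γ => ((∅ : Set (Form Ind)), γ)) α

/-- Prawitz's conjecture: whenever an operational type τ₁,…,τₙ ▷ β is inhabited
by a universal operation on grounds, the corresponding inference rule (with
matching dischargings) is derivable in IL. -/
def PrawitzConjecture {Ind : Type} (S : GroundSem Ind) : Prop :=
  ∀ (ents : List (Set (Form Ind) × Form Ind)) (β : Form Ind),
    (∃ g : S.GObj, S.UniversalOp g ∧ S.OfOpType g ents β) →
    ∀ Δ : Set (Form Ind), (∀ e ∈ ents, IL (Δ ∪ e.1) e.2) → IL Δ β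

/-- Prawitz's conjecture implies semantic completeness of IL:
if the conjecture holds then Γ ⊨ α implies Γ ⊢_IL α for all Γ and α. -/
theorem prawitz_conjecture_implies_completeness {Ind : Type}
    (S : GroundSem Ind) (hPC : PrawitzConjecture S) :
    ∀ (Γ : List (Form Ind)) (α : Form Ind),
      Models S Γ α → IL {a | a ∈ Γ} α := by
  intro Γ α ⟨g, hg, ht⟩
  refine hPC _ α ⟨g, hg, ht⟩ _ ?_
  intro e he
  simp only [List.mem_map] at he
  obtain ⟨γ, hγ, rfl⟩ := he
  exact IL.ax (by simp [hγ])
end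

section
/- Failure of closure of composition under ∀-introduction without variable restrictions: over the atomic base 𝔅 for first-order arithmetic (with atomic system Ar and domain ℕ), the composition ∀Ix(Id(x, ξ^{x=0})) of the primitive operation ∀Ix of operational type x=0 ▷ ∀x(x=0) with the identity operation Id(x, ξ^{x=0}) of type x=0 ▷ x=0 is not a 𝔅-operation on grounds of operational type x=0 ▷ ∀x(x=0). -/
/-- Closed terms of the language of first-order arithmetic. -/
inductive ATerm where
  | zero : ATerm
  | succ : ATerm → ATerm
  | add : ATerm → ATerm → ATerm
  | mul : ATerm → ATerm → ATerm

/-- Conclusions of atomic derivations: equations t = u, or ⊥. -/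
inductive ArConcl where
  | eq : ATerm → ATerm → ArConcl
  | bot : ArConcl

/-- Closed derivations in the atomic system Ar for first-order arithmetic:
reflexivity, symmetry, transitivity of =, the successor rules and the defining
rules for + and ·. -/
inductive ArDeriv : ArConcl → Type where
  | refl (t : ATerm) : ArDeriv (.eq t t)
  | symm {t u : ATerm} : ArDeriv (.eq t u) → ArDeriv (.eq u t)
  | trans {t u z : ATerm} : ArDeriv (.eq t u) → ArDeriv (.eq u z) →
      ArDeriv (.eq t z)
  | succ1 {t : ATerm} : ArDeriv (.eq .zero (.succ t)) → ArDeriv .bot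
  | succ2 {t u : ATerm} : ArDeriv (.eq (.succ t) (.succ u)) → ArDeriv (.eq t u)
  | add1 (t : ATerm) : ArDeriv (.eq (.add t .zero) t)
  | add2 (t u : ATerm) : ArDeriv (.eq (.add t (.succ u)) (.succ (.add t u)))
  | mul1 (t : ATerm) : ArDeriv (.eq (.mul t .zero) .zero)
  | mul2 (t u : ATerm) : ArDeriv (.eq (.mul t (.succ u)) (.add (.mul t u) t))

/-- The numeral for a natural number. -/
def num : ℕ → ATerm
  | 0 => .zero
  | n + 1 => .succ (num n)

/-- A family of derivations (one for each individual of the domain ℕ) is a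
𝔅-operation on grounds of operational type x = 0 iff, for every j ∈ ℕ, its j-th
member is a derivation in Ar of (the numeral of) j = 0. -/
def IsOpOfTypeXeq0 (f : ℕ → Σ c : ArConcl, ArDeriv c) : Prop :=
  ∀ j : ℕ, (f j).1 = ArConcl.eq (num j) ATerm.zero

/-- failure of closure of composition under ∀-introduction
without variable restrictions. The composition ∀Ix(Id(x, ξ^{x=0})) maps an
individual k and a ground Δ on 𝔅 for ⊢ k = 0 (a closed derivation, unchanged
under substitution for x) to ∀Ix applied to the constant family j ↦ Δ; it is a
𝔅-operation of type x=0 ▷ ∀x(x=0) only if that constant family is always an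
operation of type x = 0 — which fails: the composition is not a 𝔅-operation on
grounds of operational type x=0 ▷ ∀x(x=0). -/
theorem forallI_comp_Id_not_operation :
    ¬ ∀ (k : ℕ) (Δ : ArDeriv (.eq (num k) .zero)),
        IsOpOfTypeXeq0 (fun _ => ⟨ArConcl.eq (num k) ATerm.zero, Δ⟩) := by
  intro h
  have := h 0 (ArDeriv.refl .zero) 1
  simp [num, IsOpOfTypeXeq0] at this
end
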